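/- Assume Hypothesis (H). Then for λ-almost every x ∈ (0,1), every positive integer i occurs only finitely many times among the difference ROE digits of x; that is, λ-almost every x satisfies: for every i ≥ 1 the set {k : α_k(x) = i} is finite. In particular, for each fixed digit i₀ the set A_{i₀} = {x : α_k(x) = i₀ for infinitely many k} has λ(A_{i₀}) = 0. -/

import Mathlib

/-!
Undoing the first `k + 1` steps of the algorithm along admissible digits `d_1, …, d_{k+1}` is an
increasing affine map, which carries `(0, 1/h_{k+1}(d_{k+1})]` onto the set of points with these
digits; these fundamental intervals are disjoint subsets of `(0, 1)`. Inside one of them,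
`α_{k+2} = i` means that the remainder lies in `(1/(h + i), 1/(h + i - 1)]` with
`h = h_{k+1}(d_{k+1})`, an interval of length at most `1/h²`, i.e. a proportion at most
`1/h < l_{k+2}` of the fundamental interval. Hence `λ(α_{k+2} = i) ≤ l_{k+2}`, and the
Borel–Cantelli lemma applies because `∑ l_k < ∞`.
-/

open MeasureTheory Set

namespace ROE

/-- The `x`-sequence of the restricted Oppenheim algorithm applied to `x`:
index `k` corresponds to the paper's `x_{k+1}`, and `a k`, `b k` correspond to the paper's
`a_{k+1}`, `b_{k+1}`.  So `X a b x 0 = x₁ = x` and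
`x_{k+2} = (b_{k+1}(d_{k+1})/a_{k+1}(d_{k+1})) · (x_{k+1} - 1/d_{k+1})`. -/
noncomputable def X (a b : ℕ → ℕ → ℕ) (x : ℝ) : ℕ → ℝ
  | 0 => x
  | k + 1 =>
      let xk := X a b x k
      let d : ℕ := (⌊1 / xk⌋).toNat + 1
      ((b k d : ℝ) / (a k d : ℝ)) * (xk - 1 / (d : ℝ))

/-- The digit `d_{k+1}(x) = ⌊1/x_{k+1}⌋ + 1` of the restricted Oppenheim expansion. -/
noncomputable def D (a b : ℕ → ℕ → ℕ) (x : ℝ) (k : ℕ) : ℕ :=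
  (⌊1 / X a b x k⌋).toNat + 1

/-- The restricted Oppenheim expansion of `x` is infinite: all `x_n` lie in `(0,1)`. -/
def InfiniteROE (a b : ℕ → ℕ → ℕ) (x : ℝ) : Prop :=
  ∀ k, X a b x k ∈ Set.Ioo (0 : ℝ) 1

/-- The finite sequence `(j 0, …, j (n-1))` (the paper's `(j_1, …, j_n)`) is admissible:
`j_1 ≥ 2` and `j_{i+1} > h_i(j_i)`.  Here `h i` corresponds to the paper's `h_{i+1}`. -/
def Admissible (h : ℕ → ℕ → ℕ) (n : ℕ) (j : ℕ → ℕ) : Prop :=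
  2 ≤ j 0 ∧ ∀ i, i + 1 < n → h i (j i) < j (i + 1)

/-- The cylinder of rank `n` with base `(j 0, …, j (n-1))`: the set of `x ∈ (0,1)` with
infinite ROE whose first `n` digits are `j 0, …, j (n-1)`. -/
def cylinder (a b : ℕ → ℕ → ℕ) (n : ℕ) (j : ℕ → ℕ) : Set ℝ :=
  {x | x ∈ Set.Ioo (0 : ℝ) 1 ∧ InfiniteROE a b x ∧ ∀ i < n, D a b x i = j i}

/-- The difference-ROE digit `α_{k+1}(x)`: `α₁ = d₁ - 1`, `α_{k+2} = d_{k+2} - h_{k+1}(d_{k+1})`. -/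
noncomputable def alpha (a b h : ℕ → ℕ → ℕ) (x : ℝ) : ℕ → ℕ
  | 0 => D a b x 0 - 1
  | k + 1 => D a b x (k + 1) - h k (D a b x k)

/-- The digit sequence `d` reconstructed from a sequence `α` of difference-ROE symbols:
`d₁ = α₁ + 1`, `d_{k+2} = h_{k+1}(d_{k+1}) + α_{k+2}`. -/
def dSeq (h : ℕ → ℕ → ℕ) (α : ℕ → ℕ) : ℕ → ℕ
  | 0 => α 0 + 1
  | k + 1 => h k (dSeq h α k) + α (k + 1)

/-- The real number whose difference-ROE digits are `(α k)`:
`Φ(α) = Σ_{n≥1} (∏_{i=1}^{n-1} a_i(d_i)/b_i(d_i)) · (1/d_n)`. -/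
noncomputable def Phi (a b h : ℕ → ℕ → ℕ) (α : ℕ → ℕ) : ℝ :=
  ∑' n : ℕ, (∏ i ∈ Finset.range n, (a i (dSeq h α i) : ℝ) / (b i (dSeq h α i) : ℝ)) *
    (1 / (dSeq h α n : ℝ))

/-- `D a b x k` unfolds to `digit (X a b x k)`. -/
noncomputable def digit (t : ℝ) : ℕ := (⌊1 / t⌋).toNat + 1

lemma digit_eq_iff {t : ℝ} (ht : 0 < t) {J : ℕ} (hJ : 2 ≤ J) :
    digit t = J ↔ t ∈ Ioc (1 / (J : ℝ)) (1 / ((J : ℝ) - 1)) := by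
  have hJ' : (2 : ℝ) ≤ J := by exact_mod_cast hJ
  have hfloor : digit t = J ↔ ⌊1 / t⌋ = ((J - 1 : ℕ) : ℤ) := by
    unfold digit; omega
  rw [hfloor, Int.floor_eq_iff, mem_Ioc, Nat.cast_sub (by omega : 1 ≤ J)]
  push_cast
  rw [sub_add_cancel, le_one_div (by linarith) ht, one_div_lt ht (by linarith), and_comm]

lemma two_le_digit {t : ℝ} (ht : t ∈ Ioo 0 1) : 2 ≤ digit t := by
  have : (1 : ℤ) ≤ ⌊1 / t⌋ := Int.le_floor.2 (by exact_mod_cast (one_lt_one_div ht.1 ht.2).le)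
  unfold digit; omega

lemma mem_Ioc_digit {t : ℝ} (ht : t ∈ Ioo 0 1) :
    t ∈ Ioc (1 / (digit t : ℝ)) (1 / ((digit t : ℝ) - 1)) :=
  (digit_eq_iff ht.1 (two_le_digit ht)).1 rfl

/-- The inverse of step `k` of the algorithm when the digit is `J`. -/
noncomputable def invStep (a b : ℕ → ℕ → ℕ) (k J : ℕ) (t : ℝ) : ℝ :=
  1 / J + (a k J : ℝ) / b k J * t

structure IsROEData (a b h : ℕ → ℕ → ℕ) : Prop where
  a_pos : ∀ k j, 2 ≤ j → 0 < a k j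
  b_pos : ∀ k j, 2 ≤ j → 0 < b k j
  b_mul_h : ∀ k j, 2 ≤ j → b k j * h k j = a k j * j * (j - 1)

namespace IsROEData

variable {a b h : ℕ → ℕ → ℕ} {k J : ℕ}

lemma cast_b_mul_h (hD : IsROEData a b h) (hJ : 2 ≤ J) :
    (b k J : ℝ) * h k J = a k J * J * ((J : ℝ) - 1) := by
  have := hD.b_mul_h k J hJ
  rw [← Nat.cast_pred (by omega)]
  exact_mod_cast this

lemma h_pos (hD : IsROEData a b h) (hJ : 2 ≤ J) : 0 < h k J := by
  have hA := hD.a_pos k J hJ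
  have hJ1 : 0 < J - 1 := by omega
  refine Nat.pos_of_mul_pos_left (a := b k J) ?_
  rw [hD.b_mul_h k J hJ]
  positivity

lemma one_div_h_eq (hD : IsROEData a b h) (hJ : 2 ≤ J) :
    (1 : ℝ) / h k J = b k J / (a k J * J * ((J : ℝ) - 1)) := by
  have hA : (0 : ℝ) < a k J := by exact_mod_cast hD.a_pos k J hJ
  have hH : (0 : ℝ) < h k J := by exact_mod_cast hD.h_pos hJ
  have hJ1 : (0 : ℝ) < J - 1 := sub_pos.2 (Nat.one_lt_cast.2 hJ)
  rw [div_eq_div_iff hH.ne' (by positivity), ← hD.cast_b_mul_h hJ]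
  ring

lemma strictMono_invStep (hD : IsROEData a b h) (hJ : 2 ≤ J) : StrictMono (invStep a b k J) := by
  have hA : (0 : ℝ) < a k J := by exact_mod_cast hD.a_pos k J hJ
  have hB : (0 : ℝ) < b k J := by exact_mod_cast hD.b_pos k J hJ
  intro s t hst
  unfold invStep
  gcongr

lemma invStep_one_div_h (hD : IsROEData a b h) (hJ : 2 ≤ J) :
    invStep a b k J (1 / h k J) = 1 / ((J : ℝ) - 1) := by
  have hA : (0 : ℝ) < a k J := by exact_mod_cast hD.a_pos k J hJ
  have hB : (0 : ℝ) < b k J := by exact_mod_cast hD.b_pos k J hJ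
  have hJ1 : (0 : ℝ) < J - 1 := sub_pos.2 (Nat.one_lt_cast.2 hJ)
  rw [invStep, hD.one_div_h_eq hJ]
  field_simp
  ring

lemma invStep_mem_Ioc_iff (hD : IsROEData a b h) (hJ : 2 ≤ J) {s : ℝ} :
    invStep a b k J s ∈ Ioc (1 / (J : ℝ)) (1 / ((J : ℝ) - 1)) ↔ s ∈ Ioc 0 (1 / (h k J : ℝ)) := by
  have hmono := hD.strictMono_invStep (k := k) hJ
  have h0 : invStep a b k J 0 = 1 / J := by simp [invStep]
  rw [mem_Ioc, mem_Ioc, ← h0, ← hD.invStep_one_div_h hJ, hmono.lt_iff_lt, hmono.le_iff_le]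

end IsROEData

section Algorithm

variable {a b h : ℕ → ℕ → ℕ} {x : ℝ}

lemma X_succ (a b : ℕ → ℕ → ℕ) (x : ℝ) (k : ℕ) :
    X a b x (k + 1) =
      (b k (D a b x k) : ℝ) / a k (D a b x k) * (X a b x k - 1 / (D a b x k : ℝ)) :=
  rfl

lemma two_le_D (hx : InfiniteROE a b x) (k : ℕ) : 2 ≤ D a b x k :=
  two_le_digit (hx k)

lemma X_mem_Ioc_D (hx : InfiniteROE a b x) (k : ℕ) :
    X a b x k ∈ Ioc (1 / (D a b x k : ℝ)) (1 / ((D a b x k : ℝ) - 1)) :=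
  mem_Ioc_digit (hx k)

lemma IsROEData.invStep_X_succ (hD : IsROEData a b h) (hx : InfiniteROE a b x) (k : ℕ) :
    invStep a b k (D a b x k) (X a b x (k + 1)) = X a b x k := by
  have hJ := two_le_D hx k
  have hA : (0 : ℝ) < a k (D a b x k) := by exact_mod_cast hD.a_pos k _ hJ
  have hB : (0 : ℝ) < b k (D a b x k) := by exact_mod_cast hD.b_pos k _ hJ
  rw [invStep, X_succ]
  field_simp
  ring

lemma IsROEData.D_eq_and_X_succ_eq (hD : IsROEData a b h) {k J : ℕ} (hJ : 2 ≤ J) {s : ℝ}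
    (hs : s ∈ Ioc 0 (1 / (h k J : ℝ))) (hx : X a b x k = invStep a b k J s) :
    D a b x k = J ∧ X a b x (k + 1) = s := by
  have hmem : X a b x k ∈ Ioc (1 / (J : ℝ)) (1 / ((J : ℝ) - 1)) :=
    hx ▸ (hD.invStep_mem_Ioc_iff hJ).2 hs
  have hDJ : D a b x k = J :=
    (digit_eq_iff (lt_trans (by positivity) hmem.1) hJ).2 hmem
  refine ⟨hDJ, ?_⟩
  have hA : (0 : ℝ) < a k J := by exact_mod_cast hD.a_pos k J hJ
  have hB : (0 : ℝ) < b k J := by exact_mod_cast hD.b_pos k J hJ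
  rw [X_succ, hDJ, hx, invStep]
  field_simp
  ring

lemma IsROEData.h_D_lt_D_succ (hD : IsROEData a b h) (hx : InfiniteROE a b x) (k : ℕ) :
    h k (D a b x k) < D a b x (k + 1) := by
  have hJ := two_le_D hx k
  have hX_le : X a b x (k + 1) ≤ 1 / (h k (D a b x k) : ℝ) :=
    ((hD.invStep_mem_Ioc_iff hJ).1 (hD.invStep_X_succ hx k ▸ X_mem_Ioc_D hx k)).2
  have hH : (0 : ℝ) < h k (D a b x k) := by exact_mod_cast hD.h_pos hJ
  have hD1 : (0 : ℝ) < D a b x (k + 1) := Nat.cast_pos.2 (by linarith [two_le_D hx (k + 1)])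
  exact_mod_cast (one_div_lt_one_div hD1 hH).1 ((X_mem_Ioc_D hx (k + 1)).1.trans_le hX_le)

end Algorithm

/-- Undoes the first `n` steps of the algorithm along the digits `j 0, …, j (n-1)`. -/
noncomputable def ofDigits (a b : ℕ → ℕ → ℕ) (j : ℕ → ℕ) : ℕ → ℝ → ℝ
  | 0 => id
  | n + 1 => ofDigits a b j n ∘ invStep a b n (j n)

section OfDigits

variable {a b h : ℕ → ℕ → ℕ} {j : ℕ → ℕ} {n : ℕ}

lemma ofDigits_congr {j' : ℕ → ℕ} (hjj' : ∀ q < n, j q = j' q) :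
    ofDigits a b j n = ofDigits a b j' n := by
  induction n with
  | zero => rfl
  | succ n ih =>
    rw [ofDigits, ofDigits, ih fun q hq => hjj' q (by omega), hjj' n n.lt_succ_self]

lemma IsROEData.ofDigits_D_X (hD : IsROEData a b h) {x : ℝ} (hx : InfiniteROE a b x) (n : ℕ) :
    ofDigits a b (D a b x) n (X a b x n) = x := by
  induction n with
  | zero => rfl
  | succ n ih => rw [ofDigits, Function.comp_apply, hD.invStep_X_succ hx, ih]

lemma IsROEData.ofDigits_eq_affine (hD : IsROEData a b h) (hj : ∀ q < n, 2 ≤ j q) :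
    ∃ s c : ℝ, 0 < s ∧ ofDigits a b j n = (s * · + c) := by
  induction n with
  | zero => exact ⟨1, 0, one_pos, by ext; simp [ofDigits]⟩
  | succ n ih =>
    obtain ⟨s, c, hs, hf⟩ := ih fun q hq => hj q (by omega)
    have hA : (0 : ℝ) < a n (j n) := by exact_mod_cast hD.a_pos n _ (hj n n.lt_succ_self)
    have hB : (0 : ℝ) < b n (j n) := by exact_mod_cast hD.b_pos n _ (hj n n.lt_succ_self)
    refine ⟨s * (a n (j n) / b n (j n)), s / j n + c, by positivity, ?_⟩
    ext t
    simp only [ofDigits, hf, Function.comp_apply, invStep]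
    ring

lemma Admissible.of_succ (hj : Admissible h (n + 1) j) : Admissible h n j :=
  ⟨hj.1, fun q hq => hj.2 q (by omega)⟩

lemma IsROEData.two_le_of_admissible (hD : IsROEData a b h) (hj : Admissible h n j) :
    ∀ q < n, 2 ≤ j q := by
  intro q
  induction q with
  | zero => exact fun _ => hj.1
  | succ q ih =>
    intro hq
    have := hD.h_pos (k := q) (ih (by omega))
    have := hj.2 q hq
    omega

lemma Ioc_one_div_subset {H J : ℕ} (hH : 0 < H) (hHJ : H < J) :
    Ioc (1 / (J : ℝ)) (1 / ((J : ℝ) - 1)) ⊆ Ioc 0 (1 / (H : ℝ)) := by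
  have hH' : (0 : ℝ) < H := by exact_mod_cast hH
  have hHJ' : (H : ℝ) ≤ J - 1 := by
    rw [le_sub_iff_add_le]; exact_mod_cast hHJ
  exact Ioc_subset_Ioc (by positivity) (one_div_le_one_div_of_le hH' hHJ')

lemma IsROEData.mapsTo_ofDigits (hD : IsROEData a b h) (hj : Admissible h (n + 1) j) :
    MapsTo (ofDigits a b j (n + 1)) (Ioc 0 (1 / (h n (j n) : ℝ)))
      (Ioc (1 / (j 0 : ℝ)) (1 / ((j 0 : ℝ) - 1))) := by
  induction n with
  | zero => exact fun t ht => (hD.invStep_mem_Ioc_iff hj.1).2 ht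
  | succ n ih =>
    have h2 := hD.two_le_of_admissible hj
    refine (ih hj.of_succ).comp fun t ht => ?_
    exact Ioc_one_div_subset (hD.h_pos (h2 n (by omega))) (hj.2 n (by omega))
      ((hD.invStep_mem_Ioc_iff (h2 (n + 1) (by omega))).2 ht)

lemma IsROEData.D_ofDigits (hD : IsROEData a b h) (hj : Admissible h (n + 1) j) {t : ℝ}
    (ht : t ∈ Ioc 0 (1 / (h n (j n) : ℝ))) :
    (∀ q ≤ n, D a b (ofDigits a b j (n + 1) t) q = j q) ∧
      X a b (ofDigits a b j (n + 1) t) (n + 1) = t := by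
  induction n generalizing t with
  | zero =>
    obtain ⟨hD0, hX1⟩ := hD.D_eq_and_X_succ_eq hj.1 ht rfl
    exact ⟨fun q hq => by rwa [Nat.le_zero.1 hq], hX1⟩
  | succ n ih =>
    have h2 := hD.two_le_of_admissible hj
    set s := invStep a b (n + 1) (j (n + 1)) t
    have hs : s ∈ Ioc 0 (1 / (h n (j n) : ℝ)) :=
      Ioc_one_div_subset (hD.h_pos (h2 n (by omega))) (hj.2 n (by omega))
        ((hD.invStep_mem_Ioc_iff (h2 (n + 1) (by omega))).2 ht)
    obtain ⟨hDq, hXs⟩ := ih hj.of_succ hs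
    obtain ⟨hDn, hXt⟩ := hD.D_eq_and_X_succ_eq (h2 (n + 1) (by omega)) ht hXs
    refine ⟨fun q hq => ?_, hXt⟩
    rcases Nat.lt_succ_iff_lt_or_eq.1 (Nat.lt_succ_of_le hq) with hq | rfl
    · exact hDq q (by omega)
    · exact hDn

end OfDigits

/-- Consists of points whose first `n + 1` digits are `j 0, …, j n` when `j` is admissible
(`IsROEData.D_ofDigits`). -/
noncomputable def fundamentalInterval (a b h : ℕ → ℕ → ℕ) (j : ℕ → ℕ) (n : ℕ) : Set ℝ :=
  ofDigits a b j (n + 1) '' Ioc 0 (1 / (h n (j n) : ℝ))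

noncomputable def padDigits {n : ℕ} (v : Fin n → ℕ) : ℕ → ℕ :=
  Function.extend Fin.val v 0

lemma padDigits_apply {n : ℕ} (v : Fin n → ℕ) (q : Fin n) : padDigits v q = v q :=
  Fin.val_injective.extend_apply v 0 q

lemma frequently_add_one_of_infinite {p : ℕ → Prop} (hinf : {k | p k}.Infinite) :
    ∃ᶠ k in Filter.atTop, p (k + 1) := by
  have := Nat.frequently_atTop_iff_infinite.2 hinf
  rwa [← Filter.map_add_atTop_eq_nat 1, Filter.frequently_map] at this

section Volume

variable {a b h : ℕ → ℕ → ℕ}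

lemma IsROEData.mem_image_ofDigits (hD : IsROEData a b h) {x : ℝ} (hx : InfiniteROE a b x)
    {k : ℕ} {j : ℕ → ℕ} (hj : ∀ q ≤ k, j q = D a b x q) :
    Admissible h (k + 1) j ∧ x ∈ ofDigits a b j (k + 1) ''
      Ioc (1 / (D a b x (k + 1) : ℝ)) (1 / ((D a b x (k + 1) : ℝ) - 1)) := by
  refine ⟨⟨?_, fun q hq => ?_⟩, X a b x (k + 1), X_mem_Ioc_D hx (k + 1), ?_⟩
  · rw [hj 0 k.zero_le]; exact two_le_D hx 0
  · rw [hj q (by omega), hj (q + 1) (by omega)]; exact hD.h_D_lt_D_succ hx q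
  · rw [ofDigits_congr fun q hq => hj q (by omega), hD.ofDigits_D_X hx]

lemma one_div_sub_one_div_le {H i c : ℝ} (hH : 1 ≤ H) (hi : 1 ≤ i) (hc : 1 / H < c) :
    1 / (H + i - 1) - 1 / (H + i) ≤ c * (1 / H) := by
  have hgap : 1 / (H + i - 1) - 1 / (H + i) = 1 / ((H + i - 1) * (H + i)) := by
    have : H + i - 1 ≠ 0 := by linarith
    have : H + i ≠ 0 := by linarith
    field_simp
    ring
  calc 1 / (H + i - 1) - 1 / (H + i) ≤ 1 / H * (1 / H) := by
        rw [hgap, one_div_mul_one_div]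
        gcongr <;> linarith
    _ ≤ c * (1 / H) := by gcongr

lemma IsROEData.volume_image_ofDigits_le (hD : IsROEData a b h) {k i : ℕ} {j : ℕ → ℕ}
    (hj : Admissible h (k + 1) j) (hi : 1 ≤ i) {c : ℝ} (hc : 1 / (h k (j k) : ℝ) < c) :
    volume (ofDigits a b j (k + 1) ''
        Ioc (1 / ((h k (j k) + i : ℕ) : ℝ)) (1 / (((h k (j k) + i : ℕ) : ℝ) - 1))) ≤
      ENNReal.ofReal c * volume (fundamentalInterval a b h j k) := by
  obtain ⟨s, d, hs, hf⟩ := hD.ofDigits_eq_affine (hD.two_le_of_admissible hj)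
  have hH : (1 : ℝ) ≤ h k (j k) :=
    Nat.one_le_cast.2 (hD.h_pos (hD.two_le_of_admissible hj k k.lt_succ_self))
  have hc0 : 0 ≤ c := (one_div_pos.2 (by linarith)).le.trans hc.le
  rw [fundamentalInterval, hf, image_affine_Ioc hs, image_affine_Ioc hs, Real.volume_Ioc,
    Real.volume_Ioc, ← ENNReal.ofReal_mul hc0]
  apply ENNReal.ofReal_le_ofReal
  have := one_div_sub_one_div_le hH (Nat.one_le_cast.2 hi) hc
  push_cast
  nlinarith

lemma IsROEData.tsum_volume_fundamentalInterval_le_one (hD : IsROEData a b h) {k : ℕ}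
    (S : Set (Fin (k + 1) → ℕ)) (hS : ∀ v ∈ S, Admissible h (k + 1) (padDigits v)) :
    ∑' v : S, volume (fundamentalInterval a b h (padDigits v.1) k) ≤ 1 := by
  have hmeas : ∀ v ∈ S, MeasurableSet (fundamentalInterval a b h (padDigits v) k) := by
    intro v hv
    obtain ⟨s, d, hs, hf⟩ := hD.ofDigits_eq_affine (hD.two_le_of_admissible (hS v hv))
    rw [fundamentalInterval, hf, image_affine_Ioc hs]
    exact measurableSet_Ioc
  have hdisj : S.PairwiseDisjoint fun v => fundamentalInterval a b h (padDigits v) k := by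
    intro v hv v' hv' hne
    refine disjoint_left.2 ?_
    rintro y ⟨t, ht, rfl⟩ ⟨t', ht', hy⟩
    refine hne (funext fun q => ?_)
    have hq := (hD.D_ofDigits (hS v hv) ht).1 q q.is_le
    have hq' := (hD.D_ofDigits (hS v' hv') ht').1 q q.is_le
    rw [hy] at hq'
    simpa only [padDigits_apply] using hq.symm.trans hq'
  have hsub : ∀ v ∈ S, fundamentalInterval a b h (padDigits v) k ⊆ Ioc 0 1 := by
    intro v hv
    have h2 : (2 : ℝ) ≤ padDigits v 0 := by exact_mod_cast (hS v hv).1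
    refine (hD.mapsTo_ofDigits (hS v hv)).image_subset.trans (Ioc_subset_Ioc ?_ ?_)
    · positivity
    · rw [div_le_one (by linarith)]; linarith
  rw [← measure_biUnion S.to_countable hdisj hmeas]
  calc _ ≤ volume (Ioc (0 : ℝ) 1) := measure_mono (iUnion₂_subset hsub)
    _ = 1 := by simp

lemma IsROEData.volume_alpha_succ_eq_le (hD : IsROEData a b h) {k i : ℕ} (hi : 1 ≤ i) {c : ℝ}
    (hc : ∀ x, InfiniteROE a b x → 1 / (h k (D a b x k) : ℝ) < c) :
    volume {x | x ∈ Ioo (0 : ℝ) 1 ∧ InfiniteROE a b x ∧ alpha a b h x (k + 1) = i} ≤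
      ENNReal.ofReal c := by
  set S : Set (Fin (k + 1) → ℕ) :=
    {v | Admissible h (k + 1) (padDigits v) ∧ 1 / (h k (padDigits v k) : ℝ) < c}
  set piece : (Fin (k + 1) → ℕ) → Set ℝ := fun v => ofDigits a b (padDigits v) (k + 1) ''
    Ioc (1 / ((h k (padDigits v k) + i : ℕ) : ℝ)) (1 / (((h k (padDigits v k) + i : ℕ) : ℝ) - 1))
  have hcover : {x | x ∈ Ioo (0 : ℝ) 1 ∧ InfiniteROE a b x ∧ alpha a b h x (k + 1) = i} ⊆
      ⋃ v ∈ S, piece v := by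
    rintro x ⟨-, hx, hα⟩
    set v : Fin (k + 1) → ℕ := fun q => D a b x q
    have hv : ∀ q ≤ k, padDigits v q = D a b x q := fun q hq => padDigits_apply v ⟨q, by omega⟩
    obtain ⟨hadm, hmem⟩ := hD.mem_image_ofDigits hx hv
    have hDk : D a b x (k + 1) = h k (padDigits v k) + i := by
      have := hD.h_D_lt_D_succ hx k
      rw [alpha] at hα
      rw [hv k le_rfl]
      omega
    refine mem_biUnion ⟨hadm, hv k le_rfl ▸ hc x hx⟩ ?_
    simp only [piece, ← hDk]
    exact hmem
  calc _ ≤ ∑' v : S, volume (piece v) :=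
        (measure_mono hcover).trans (measure_biUnion_le _ S.to_countable _)
    _ ≤ ∑' v : S, ENNReal.ofReal c * volume (fundamentalInterval a b h (padDigits v.1) k) :=
        ENNReal.tsum_le_tsum fun v => hD.volume_image_ofDigits_le v.2.1 hi v.2.2
    _ ≤ ENNReal.ofReal c * 1 := by
        rw [ENNReal.tsum_mul_left]
        gcongr
        exact hD.tsum_volume_fundamentalInterval_le_one S fun v hv => hv.1
    _ = ENNReal.ofReal c := mul_one _

lemma IsROEData.volume_alpha_infinite_eq_zero (hD : IsROEData a b h) {i : ℕ} (hi : 1 ≤ i)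
    {c : ℕ → ℝ} (hcsum : Summable c)
    (hc : ∀ x, InfiniteROE a b x → ∀ k, 1 / (h k (D a b x k) : ℝ) < c k) :
    volume {x : ℝ | x ∈ Ioo (0 : ℝ) 1 ∧ InfiniteROE a b x ∧
      {k : ℕ | alpha a b h x k = i}.Infinite} = 0 := by
  have hbound : ∀ k, volume {x | x ∈ Ioo (0 : ℝ) 1 ∧ InfiniteROE a b x ∧
      alpha a b h x (k + 1) = i} ≤ ENNReal.ofReal (c k) :=
    fun k => hD.volume_alpha_succ_eq_le hi fun x hx => hc x hx k
  refine measure_mono_null (fun x ⟨hxI, hx, hinf⟩ => ?_) (measure_limsup_atTop_eq_zero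
    (ne_top_of_le_ne_top hcsum.tsum_ofReal_ne_top (ENNReal.tsum_le_tsum hbound)))
  exact Filter.mem_limsup_iff_frequently_mem.2
    ((frequently_add_one_of_infinite hinf).mono fun k hk => ⟨hxI, hx, hk⟩)

end Volume

theorem ae_finitely_many_occurrences_general (a b h : ℕ → ℕ → ℕ)
    (ha : ∀ k j, 2 ≤ j → 0 < a k j) (hb : ∀ k j, 2 ≤ j → 0 < b k j)
    (hab : ∀ k j, 2 ≤ j → b k j * h k j = a k j * j * (j - 1))
    (l : ℕ → ℝ)
    (hlsum : Summable fun m : ℕ => l (m + 2))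
    (hH : ∀ x : ℝ, InfiniteROE a b x → ∀ m : ℕ,
      (b m (D a b x m) : ℝ) /
          ((a m (D a b x m) : ℝ) * (D a b x m : ℝ) * ((D a b x m : ℝ) - 1)) < l (m + 2)) :
    (∀ᵐ x ∂(volume.restrict (Set.Ioo (0 : ℝ) 1)),
      InfiniteROE a b x → ∀ i : ℕ, 1 ≤ i → {k : ℕ | alpha a b h x k = i}.Finite) ∧
    ∀ i₀ : ℕ, 1 ≤ i₀ →
      volume {x : ℝ | x ∈ Set.Ioo (0 : ℝ) 1 ∧ InfiniteROE a b x ∧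
        {k : ℕ | alpha a b h x k = i₀}.Infinite} = 0 := by
  have hD : IsROEData a b h := ⟨ha, hb, hab⟩
  have hnull : ∀ i₀ : ℕ, 1 ≤ i₀ → volume {x : ℝ | x ∈ Set.Ioo (0 : ℝ) 1 ∧ InfiniteROE a b x ∧
      {k : ℕ | alpha a b h x k = i₀}.Infinite} = 0 := fun i₀ hi₀ =>
    hD.volume_alpha_infinite_eq_zero hi₀ hlsum fun x hx k =>
      hD.one_div_h_eq (two_le_D hx k) ▸ hH x hx k
  have hae : ∀ i, ∀ᵐ x, 1 ≤ i → x ∉ {x : ℝ | x ∈ Set.Ioo (0 : ℝ) 1 ∧ InfiniteROE a b x ∧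
      {k : ℕ | alpha a b h x k = i}.Infinite} := fun i => by
    by_cases hi : 1 ≤ i
    · exact (measure_eq_zero_iff_ae_notMem.1 (hnull i hi)).mono fun x hx _ => hx
    · exact Filter.Eventually.of_forall fun x hi' => absurd hi' hi
  refine ⟨?_, hnull⟩
  rw [ae_restrict_iff' measurableSet_Ioo]
  filter_upwards [ae_all_iff.2 hae] with x hx hxI hxInf i hi
  exact Set.not_infinite.1 fun hinf => hx i hi ⟨hxI, hxInf, hinf⟩

/-- Assume Hypothesis (H).  Then for `λ`-almost every `x ∈ (0,1)`, every positive
integer `i` occurs only finitely many times among the difference-ROE digits of `x`; in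
particular, for each fixed digit `i₀` the set
`A_{i₀} = {x : α_k(x) = i₀ for infinitely many k}` satisfies `λ(A_{i₀}) = 0`. -/
theorem ae_finitely_many_occurrences (a b h : ℕ → ℕ → ℕ)
    (ha : ∀ k j, 2 ≤ j → 0 < a k j) (hb : ∀ k j, 2 ≤ j → 0 < b k j)
    (hpos : ∀ k j, 2 ≤ j → 0 < h k j)
    (hab : ∀ k j, 2 ≤ j → b k j * h k j = a k j * j * (j - 1))
    (l : ℕ → ℝ) (hlpos : ∀ k, 2 ≤ k → 0 < l k)
    (hlsum : Summable fun m : ℕ => l (m + 2))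
    (hH : ∀ x : ℝ, InfiniteROE a b x → ∀ m : ℕ,
      (b m (D a b x m) : ℝ) /
          ((a m (D a b x m) : ℝ) * (D a b x m : ℝ) * ((D a b x m : ℝ) - 1)) < l (m + 2)) :
    (∀ᵐ x ∂(volume.restrict (Set.Ioo (0 : ℝ) 1)),
      InfiniteROE a b x → ∀ i : ℕ, 1 ≤ i → {k : ℕ | alpha a b h x k = i}.Finite) ∧
    ∀ i₀ : ℕ, 1 ≤ i₀ →
      volume {x : ℝ | x ∈ Set.Ioo (0 : ℝ) 1 ∧ InfiniteROE a b x ∧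
        {k : ℕ | alpha a b h x k = i₀}.Infinite} = 0 :=
  ae_finitely_many_occurrences_general a b h ha hb hab l hlsum hH

end ROE
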